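/- Let κ_1 ≥ ... ≥ κ_n > 0 with κ_1 ≥ 1, and set κ̃_1 = κ_1 and κ̃_p = κ_p − 1 for p > 1. Then for every p > 1: (a) if κ_p = κ_1, then σ_{k-1}(κ|p)/κ_1² ≤ σ_{k-1}(κ|1)/(κ_1(κ_1 − κ̃_p)); (b) if κ_p < κ_1, then σ_{k-1}(κ|p)/κ_1² ≤ 2σ_{k-1}(κ|1)/(κ_1(κ_1 − κ̃_p)) + (σ_{k-1}(κ|p) − σ_{k-1}(κ|1))/(κ_1(κ_1 − κ_p)). Consequently, for any reals t_2, ..., t_n: ∑_{p>1} σ_{k-1}(κ|p) t_p²/κ_1² ≤ 2∑_{p>1} σ_{k-2}(κ|1p) t_p²/κ_1 + 2∑_{p>1} σ_{k-1}(κ|1) t_p²/(κ_1(κ_1−κ̃_p)). -/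

import Mathlib

/-!
Write `A = σ_{k-2}(κ|1p)` and `B = σ_{k-1}(κ|1p)`. Splitting off one more entry gives
`σ_{k-1}(κ|p) = κ_1 A + B` and `σ_{k-1}(κ|1) = κ_p A + B`, so
`σ_{k-1}(κ|p) / κ_1² = A / κ_1 + B / κ_1²` with `B ≤ σ_{k-1}(κ|1)`. Since
`0 < κ_1 - κ̃_p ≤ 2 κ_1`, the second term is at most `2 σ_{k-1}(κ|1) / (κ_1 (κ_1 - κ̃_p))`, while
the first is the difference quotient `(σ_{k-1}(κ|p) - σ_{k-1}(κ|1)) / (κ_1 - κ_p)` divided by `κ_1`.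
When `κ_p = κ_1` the two deleted polynomials coincide and `κ_1 - κ̃_p = 1 ≤ κ_1`.
-/

open Finset

/-- The `k`-th elementary symmetric polynomial of `κ : Fin n → ℝ`. -/
noncomputable def esymm (n k : ℕ) (κ : Fin n → ℝ) : ℝ :=
  ∑ s ∈ Finset.univ.powersetCard k, ∏ i ∈ s, κ i

/-- `σ_k(κ|p)`: elementary symmetric polynomial with the `p`-th entry deleted. -/
noncomputable def esymmDel (n k : ℕ) (κ : Fin n → ℝ) (p : Fin n) : ℝ :=
  ∑ s ∈ (Finset.univ.erase p).powersetCard k, ∏ i ∈ s, κ i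

/-- `σ_k(κ|pq)`: elementary symmetric polynomial with the `p`-th and `q`-th entries deleted. -/
noncomputable def esymmDel2 (n k : ℕ) (κ : Fin n → ℝ) (p q : Fin n) : ℝ :=
  ∑ s ∈ ((Finset.univ.erase p).erase q).powersetCard k, ∏ i ∈ s, κ i

theorem Multiset.esymm_cons_succ {R : Type*} [CommSemiring R] (a : R) (s : Multiset R) (m : ℕ) :
    (a ::ₘ s).esymm (m + 1) = a * s.esymm m + s.esymm (m + 1) := by
  simp only [Multiset.esymm, Multiset.powersetCard_cons, Multiset.map_add, Multiset.sum_add,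
    Multiset.map_map, Function.comp_def, Multiset.prod_cons, Multiset.sum_map_mul_left]
  ring

theorem Finset.sum_powersetCard_succ_insert_prod {ι R : Type*} [DecidableEq ι] [CommSemiring R]
    (f : ι → R) {s : Finset ι} {q : ι} (hq : q ∉ s) (m : ℕ) :
    ∑ t ∈ (insert q s).powersetCard (m + 1), ∏ i ∈ t, f i
      = f q * ∑ t ∈ s.powersetCard m, ∏ i ∈ t, f i
        + ∑ t ∈ s.powersetCard (m + 1), ∏ i ∈ t, f i := by
  simp only [← Finset.esymm_map_val, Finset.insert_val_of_notMem hq, Multiset.map_cons,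
    Multiset.esymm_cons_succ]

theorem div_sq_le_two_mul_div {x K d : ℝ} (hx : 0 ≤ x) (hK : 0 < K) (hd : 0 < d)
    (hdK : d ≤ 2 * K) : x / K ^ 2 ≤ 2 * x / (K * d) :=
  calc x / K ^ 2 = 2 * x / (K * (2 * K)) := by field_simp
    _ ≤ 2 * x / (K * d) := by gcongr

section DeletedEsymm

variable {n : ℕ} (κ : Fin n → ℝ)

theorem esymmDel2_comm (m : ℕ) (p q : Fin n) : esymmDel2 n m κ p q = esymmDel2 n m κ q p := by
  rw [esymmDel2, esymmDel2, erase_right_comm]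

theorem esymmDel_nonneg (hκ : ∀ i, 0 ≤ κ i) (m : ℕ) (p : Fin n) : 0 ≤ esymmDel n m κ p :=
  sum_nonneg fun _ _ => prod_nonneg fun i _ => hκ i

theorem esymmDel2_nonneg (hκ : ∀ i, 0 ≤ κ i) (m : ℕ) (p q : Fin n) : 0 ≤ esymmDel2 n m κ p q :=
  sum_nonneg fun _ _ => prod_nonneg fun i _ => hκ i

theorem esymmDel_succ {p q : Fin n} (hpq : p ≠ q) (m : ℕ) :
    esymmDel n (m + 1) κ p = κ q * esymmDel2 n m κ q p + esymmDel2 n (m + 1) κ q p := by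
  rw [esymmDel2_comm, esymmDel2_comm κ (m + 1), esymmDel2, esymmDel2, esymmDel,
    ← sum_powersetCard_succ_insert_prod κ (notMem_erase q _),
    insert_erase (mem_erase.2 ⟨hpq.symm, mem_univ q⟩)]

theorem esymmDel_sub_esymmDel {p q : Fin n} (hpq : p ≠ q) (m : ℕ) :
    esymmDel n (m + 1) κ p - esymmDel n (m + 1) κ q = (κ q - κ p) * esymmDel2 n m κ q p := by
  rw [esymmDel_succ κ hpq, esymmDel_succ κ hpq.symm, esymmDel2_comm κ _ p, esymmDel2_comm κ _ p]
  ring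

theorem esymmDel2_succ_le_esymmDel (hκ : ∀ i, 0 ≤ κ i) {p q : Fin n} (hpq : p ≠ q) (m : ℕ) :
    esymmDel2 n (m + 1) κ q p ≤ esymmDel n (m + 1) κ q := by
  rw [esymmDel_succ κ hpq.symm, esymmDel2_comm κ _ p, esymmDel2_comm κ _ p]
  exact le_add_of_nonneg_left (mul_nonneg (hκ p) (esymmDel2_nonneg κ hκ _ _ _))

theorem esymmDel_div_sq_le (hκ : ∀ i, 0 ≤ κ i) {p q : Fin n} (hpq : p ≠ q) (hq : 1 ≤ κ q)
    (hpq_le : κ p ≤ κ q) (m : ℕ) :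
    esymmDel n (m + 1) κ p / κ q ^ 2
      ≤ 2 * esymmDel n (m + 1) κ q / (κ q * (κ q - (κ p - 1))) + esymmDel2 n m κ q p / κ q := by
  have hq0 : 0 < κ q := by linarith
  calc esymmDel n (m + 1) κ p / κ q ^ 2
      = esymmDel2 n (m + 1) κ q p / κ q ^ 2 + esymmDel2 n m κ q p / κ q := by
        rw [esymmDel_succ κ hpq]
        field_simp
        ring
    _ ≤ esymmDel n (m + 1) κ q / κ q ^ 2 + esymmDel2 n m κ q p / κ q := by
        grw [esymmDel2_succ_le_esymmDel κ hκ hpq m]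
    _ ≤ _ := add_le_add (div_sq_le_two_mul_div (esymmDel_nonneg κ hκ _ q) hq0
        (by linarith [hκ p]) (by linarith [hκ p])) le_rfl

theorem esymmDel_mul_div_sq_le (hκ : ∀ i, 0 ≤ κ i) {p q : Fin n} (hpq : p ≠ q) (hq : 1 ≤ κ q)
    (hpq_le : κ p ≤ κ q) (m : ℕ) {T : ℝ} (hT : 0 ≤ T) :
    esymmDel n (m + 1) κ p * T / κ q ^ 2
      ≤ 2 * (esymmDel2 n m κ q p * T / κ q)
        + 2 * (esymmDel n (m + 1) κ q * T / (κ q * (κ q - (κ p - 1)))) := by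
  rw [mul_div_right_comm]
  refine (mul_le_mul_of_nonneg_right (esymmDel_div_sq_le κ hκ hpq hq hpq_le m) hT).trans ?_
  rw [add_mul, add_comm]
  apply add_le_add
  · have hA : 0 ≤ esymmDel2 n m κ q p * T / κ q :=
      div_nonneg (mul_nonneg (esymmDel2_nonneg κ hκ _ _ _) hT) (by linarith)
    rw [div_mul_eq_mul_div]
    linarith
  · exact le_of_eq (by ring)

end DeletedEsymm

/-- Perturbed eigenvalue comparison (Lemma 3.2): with κ̃₁ = κ₁ and κ̃_p = κ_p − 1 for p > 1. -/
theorem perturbed_eigen_compare (n k : ℕ) (hk : 2 ≤ k) (hkn : k ≤ n)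
    (κ : Fin n → ℝ) (hpos : ∀ i, 0 < κ i)
    (hdec : ∀ i j : Fin n, i ≤ j → κ j ≤ κ i)
    (h1 : 1 ≤ κ ⟨0, by omega⟩) :
    (∀ p : Fin n, p ≠ ⟨0, by omega⟩ → κ p = κ ⟨0, by omega⟩ →
      esymmDel n (k - 1) κ p / (κ ⟨0, by omega⟩) ^ 2
        ≤ esymmDel n (k - 1) κ ⟨0, by omega⟩
            / (κ ⟨0, by omega⟩ * (κ ⟨0, by omega⟩ - (κ p - 1)))) ∧
    (∀ p : Fin n, p ≠ ⟨0, by omega⟩ → κ p < κ ⟨0, by omega⟩ →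
      esymmDel n (k - 1) κ p / (κ ⟨0, by omega⟩) ^ 2
        ≤ 2 * esymmDel n (k - 1) κ ⟨0, by omega⟩
            / (κ ⟨0, by omega⟩ * (κ ⟨0, by omega⟩ - (κ p - 1)))
          + (esymmDel n (k - 1) κ p - esymmDel n (k - 1) κ ⟨0, by omega⟩)
            / (κ ⟨0, by omega⟩ * (κ ⟨0, by omega⟩ - κ p))) ∧
    (∀ t : Fin n → ℝ,
      ∑ p ∈ Finset.univ.erase (⟨0, by omega⟩ : Fin n),
          esymmDel n (k - 1) κ p * t p ^ 2 / (κ ⟨0, by omega⟩) ^ 2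
        ≤ 2 * ∑ p ∈ Finset.univ.erase (⟨0, by omega⟩ : Fin n),
            esymmDel2 n (k - 2) κ ⟨0, by omega⟩ p * t p ^ 2 / κ ⟨0, by omega⟩
          + 2 * ∑ p ∈ Finset.univ.erase (⟨0, by omega⟩ : Fin n),
              esymmDel n (k - 1) κ ⟨0, by omega⟩ * t p ^ 2
                / (κ ⟨0, by omega⟩ * (κ ⟨0, by omega⟩ - (κ p - 1)))) := by
  have hκ : ∀ i, 0 ≤ κ i := fun i => (hpos i).le
  set m := k - 2
  rw [show k - 1 = m + 1 by omega]
  set z : Fin n := ⟨0, by omega⟩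
  have hz : ∀ p, κ p ≤ κ z := fun p => hdec z p (Nat.zero_le _)
  refine ⟨fun p hp hpz => ?_, fun p hp hpz => ?_, fun t => ?_⟩
  · have hσ : esymmDel n (m + 1) κ p = esymmDel n (m + 1) κ z :=
      sub_eq_zero.1 (by rw [esymmDel_sub_esymmDel κ hp, hpz, sub_self, zero_mul])
    rw [hσ, hpz, sub_sub_cancel, mul_one]
    exact div_le_div_of_nonneg_left (esymmDel_nonneg κ hκ _ z) (by linarith) (by nlinarith)
  · rw [esymmDel_sub_esymmDel κ hp, mul_comm (κ z) (κ z - κ p),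
      mul_div_mul_left _ _ (sub_ne_zero.2 hpz.ne')]
    exact esymmDel_div_sq_le κ hκ hp h1 (hz p) _
  · rw [mul_sum, mul_sum, ← sum_add_distrib]
    exact sum_le_sum fun p hp =>
      esymmDel_mul_div_sq_le κ hκ (ne_of_mem_erase hp) h1 (hz p) _ (sq_nonneg (t p))
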